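/- There exists a constant C′ > 0 such that for every λ ∈ (0,1] and every x ∈ Ω one has 0 < u_λ(x) ≤ C′ λ. -/

import Mathlib

open Set Filter Topology

/-- partial derivative in the first variable. -/
noncomputable def px (g : ℝ × ℝ → ℝ) (p : ℝ × ℝ) : ℝ :=
  deriv (fun t => g (t, p.2)) p.1

/-- partial derivative in the second variable. -/
noncomputable def py (g : ℝ × ℝ → ℝ) (p : ℝ × ℝ) : ℝ :=
  deriv (fun t => g (p.1, t)) p.2

/-- The Laplacian `Δg = g_xx + g_yy`. -/
noncomputable def lapl (g : ℝ × ℝ → ℝ) (p : ℝ × ℝ) : ℝ :=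
  px (px g) p + py (py g) p

/-- `Ω` has `C²` boundary: near each boundary point, `Ω` and `∂Ω` are the sublevel
set and the zero set of a `C²` defining function with nonvanishing gradient. -/
def C2Boundary (Ω : Set (ℝ × ℝ)) : Prop :=
  ∀ p ∈ frontier Ω, ∃ (U : Set (ℝ × ℝ)) (φ : ℝ × ℝ → ℝ),
    IsOpen U ∧ p ∈ U ∧ ContDiff ℝ 2 φ ∧ (∀ q ∈ U, fderiv ℝ φ q ≠ 0) ∧
    (Ω ∩ U = {q ∈ U | φ q < 0}) ∧ (frontier Ω ∩ U = {q ∈ U | φ q = 0})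

/-! Adding the barrier `λ M |x|² / 4`, where `f < M` on `[0, C]`, turns `u_λ` into a strictly
subharmonic function. Its maximum over `closure Ω` therefore lies on `∂Ω`, where `u_λ = 0`, so
`u_λ ≤ λ M R / 4` with `|x|² < R` on `closure Ω`. At an interior maximum each one-variable
slice has a nonpositive second derivative, so no regularity beyond continuity is needed there. -/

lemma px_px_eq_iteratedDeriv (g : ℝ × ℝ → ℝ) (p : ℝ × ℝ) :
    px (px g) p = iteratedDeriv 2 (fun t => g (t, p.2)) p.1 := by
  rw [iteratedDeriv_succ, iteratedDeriv_one]
  rfl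

lemma py_py_eq_iteratedDeriv (g : ℝ × ℝ → ℝ) (p : ℝ × ℝ) :
    py (py g) p = iteratedDeriv 2 (fun t => g (p.1, t)) p.2 := by
  rw [iteratedDeriv_succ, iteratedDeriv_one]
  rfl

lemma lapl_add {g h : ℝ × ℝ → ℝ} {p : ℝ × ℝ} (hg : ContDiffAt ℝ 2 g p)
    (hh : ContDiffAt ℝ 2 h p) : lapl (fun w => g w + h w) p = lapl g p + lapl h p := by
  have slice_x {k : ℝ × ℝ → ℝ} (hk : ContDiffAt ℝ 2 k p) :
      ContDiffAt ℝ (2 : ℕ) (fun t => k (t, p.2)) p.1 :=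
    hk.comp (f := fun t : ℝ => (t, p.2)) p.1 (by fun_prop)
  have slice_y {k : ℝ × ℝ → ℝ} (hk : ContDiffAt ℝ 2 k p) :
      ContDiffAt ℝ (2 : ℕ) (fun t => k (p.1, t)) p.2 :=
    hk.comp (f := fun t : ℝ => (p.1, t)) p.2 (by fun_prop)
  simp only [lapl, px_px_eq_iteratedDeriv, py_py_eq_iteratedDeriv,
    iteratedDeriv_fun_add (slice_x hg) (slice_x hh),
    iteratedDeriv_fun_add (slice_y hg) (slice_y hh)]
  ring

lemma lapl_const_mul_sq_add_sq (c : ℝ) (p : ℝ × ℝ) :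
    lapl (fun w => c * (w.1 ^ 2 + w.2 ^ 2)) p = 4 * c := by
  have hsq : deriv (fun t : ℝ => t ^ 2) = fun t => 2 * t := funext fun t => by simp
  simp only [lapl, px_px_eq_iteratedDeriv, py_py_eq_iteratedDeriv, iteratedDeriv_const_mul_field,
    iteratedDeriv_succ, iteratedDeriv_zero, deriv_add_const', deriv_const_add', hsq,
    deriv_const_mul_id']
  ring

lemma deriv_deriv_nonpos_of_isLocalMax {g : ℝ → ℝ} {x : ℝ} (hmax : IsLocalMax g x)
    (hc : ContinuousAt g x) : deriv (deriv g) x ≤ 0 := by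
  by_contra! hpos
  -- the second derivative test makes `x` a local minimum too, so `g` is locally constant
  have hmin : IsLocalMin g x := isLocalMin_of_deriv_deriv_pos hpos hmax.deriv_eq_zero hc
  have hconst : g =ᶠ[𝓝 x] fun _ => g x := by
    filter_upwards [hmin, hmax] with y hy₁ hy₂ using le_antisymm hy₂ hy₁
  have : deriv (deriv g) x = 0 := by
    rw [hconst.deriv.deriv_eq]
    simp
  exact hpos.ne' this

lemma lapl_nonpos_of_isLocalMax {v : ℝ × ℝ → ℝ} {q : ℝ × ℝ} (hmax : IsLocalMax v q)
    (hc : ContinuousAt v q) : lapl v q ≤ 0 := by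
  have hx : Tendsto (fun t : ℝ => (t, q.2)) (𝓝 q.1) (𝓝 q) :=
    (Continuous.prodMk_left q.2).tendsto q.1
  have hy : Tendsto (fun t : ℝ => (q.1, t)) (𝓝 q.2) (𝓝 q) :=
    (Continuous.prodMk_right q.1).tendsto q.2
  have hxx : px (px v) q ≤ 0 :=
    deriv_deriv_nonpos_of_isLocalMax (hx.eventually hmax) (hc.tendsto.comp hx)
  have hyy : py (py v) q ≤ 0 :=
    deriv_deriv_nonpos_of_isLocalMax (hy.eventually hmax) (hc.tendsto.comp hy)
  exact add_nonpos hxx hyy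

lemma exists_mem_frontier_le_of_lapl_pos {Ω : Set (ℝ × ℝ)} (hΩo : IsOpen Ω)
    (hΩb : Bornology.IsBounded Ω) {v : ℝ × ℝ → ℝ} (hv : ContinuousOn v (closure Ω))
    (hlap : ∀ q ∈ Ω, 0 < lapl v q) {p : ℝ × ℝ} (hp : p ∈ Ω) :
    ∃ q ∈ frontier Ω, v p ≤ v q := by
  obtain ⟨q, hq, hqmax⟩ :=
    hΩb.isCompact_closure.exists_isMaxOn ⟨p, subset_closure hp⟩ hv
  refine ⟨q, ?_, hqmax (subset_closure hp)⟩
  rw [hΩo.frontier_eq]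
  refine ⟨hq, fun hqΩ => (hlap q hqΩ).not_ge (lapl_nonpos_of_isLocalMax ?_ ?_)⟩
  · exact (hqmax.on_subset subset_closure).localize.isLocalMax (hΩo.mem_nhds hqΩ)
  · exact hv.continuousAt (mem_of_superset (hΩo.mem_nhds hqΩ) subset_closure)

lemma le_of_neg_lt_lapl {Ω : Set (ℝ × ℝ)} (hΩo : IsOpen Ω) (hΩb : Bornology.IsBounded Ω)
    {u : ℝ × ℝ → ℝ} (hu : ContinuousOn u (closure Ω)) (hu₂ : ContDiffOn ℝ 2 u Ω)
    {K R : ℝ} (hK : 0 ≤ K) (hlap : ∀ q ∈ Ω, -K < lapl u q)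
    (hbd : ∀ q ∈ frontier Ω, u q ≤ 0) (hR : ∀ q ∈ frontier Ω, q.1 ^ 2 + q.2 ^ 2 ≤ R)
    {p : ℝ × ℝ} (hp : p ∈ Ω) : u p ≤ K / 4 * R := by
  set v : ℝ × ℝ → ℝ := fun w => u w + K / 4 * (w.1 ^ 2 + w.2 ^ 2)
  have hv : ContinuousOn v (closure Ω) := hu.add (by fun_prop)
  have hvlap : ∀ q ∈ Ω, 0 < lapl v q := fun q hq => by
    have hbarrier : ContDiffAt ℝ 2 (fun w : ℝ × ℝ => K / 4 * (w.1 ^ 2 + w.2 ^ 2)) q := by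
      fun_prop
    rw [lapl_add (hu₂.contDiffAt (hΩo.mem_nhds hq)) hbarrier, lapl_const_mul_sq_add_sq]
    linarith [hlap q hq]
  obtain ⟨q, hq, hpq⟩ := exists_mem_frontier_le_of_lapl_pos hΩo hΩb hv hvlap hp
  calc u p ≤ v p := le_add_of_nonneg_right (by positivity)
    _ ≤ v q := hpq
    _ ≤ 0 + K / 4 * R :=
      add_le_add (hbd q hq) (mul_le_mul_of_nonneg_left (hR q hq) (by positivity))
    _ = K / 4 * R := zero_add _

lemma IsCompact.exists_pos_forall_lt {X : Type*} [TopologicalSpace X] {s : Set X}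
    (hs : IsCompact s) {g : X → ℝ} (hg : ContinuousOn g s) : ∃ M > 0, ∀ x ∈ s, g x < M := by
  obtain ⟨M, hM⟩ := hs.bddAbove_image hg
  exact ⟨max M 0 + 1, by positivity, fun x hx =>
    (hM (mem_image_of_mem g hx)).trans_lt ((le_max_left M 0).trans_lt (lt_add_one _))⟩

theorem stmt18_general (Ω : Set (ℝ × ℝ)) (hΩo : IsOpen Ω)
    (hΩb : Bornology.IsBounded Ω)
    (f : ℝ → ℝ) (hf : ContDiff ℝ 1 f)
    (C : ℝ)
    (u : ℝ → (ℝ × ℝ) → ℝ)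
    (hcont : ∀ lam ∈ Set.Ioc (0:ℝ) 1, ContinuousOn (u lam) (closure Ω))
    (hreg : ∀ lam ∈ Set.Ioc (0:ℝ) 1, ContDiffOn ℝ 2 (u lam) Ω)
    (hpos : ∀ lam ∈ Set.Ioc (0:ℝ) 1, ∀ p ∈ Ω, 0 < u lam p)
    (hbd : ∀ lam ∈ Set.Ioc (0:ℝ) 1, ∀ p ∈ frontier Ω, u lam p = 0)
    (hpde : ∀ lam ∈ Set.Ioc (0:ℝ) 1, ∀ p ∈ Ω, lapl (u lam) p = -(lam * f (u lam p)))
    (hub : ∀ lam ∈ Set.Ioc (0:ℝ) 1, ∀ p ∈ Ω, u lam p ≤ C) :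
    ∃ C' > (0:ℝ), ∀ lam ∈ Set.Ioc (0:ℝ) 1, ∀ p ∈ Ω,
      0 < u lam p ∧ u lam p ≤ C' * lam := by
  obtain ⟨M, hM, hfM⟩ :=
    isCompact_Icc.exists_pos_forall_lt (hf.continuous.continuousOn (s := Icc 0 C))
  obtain ⟨R, hR, hΩR⟩ := hΩb.isCompact_closure.exists_pos_forall_lt
    (g := fun q : ℝ × ℝ => q.1 ^ 2 + q.2 ^ 2) (by fun_prop)
  refine ⟨M / 4 * R, by positivity, fun lam hlam p hp => ⟨hpos lam hlam p hp, ?_⟩⟩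
  have hlap : ∀ q ∈ Ω, -(lam * M) < lapl (u lam) q := fun q hq => by
    rw [hpde lam hlam q hq, neg_lt_neg_iff]
    exact mul_lt_mul_of_pos_left (hfM _ ⟨(hpos lam hlam q hq).le, hub lam hlam q hq⟩) hlam.1
  calc u lam p ≤ lam * M / 4 * R :=
        le_of_neg_lt_lapl hΩo hΩb (hcont lam hlam) (hreg lam hlam) (mul_pos hlam.1 hM).le hlap
          (fun q hq => (hbd lam hlam q hq).le)
          (fun q hq => (hΩR q (frontier_subset_closure hq)).le) hp
    _ = M / 4 * R * lam := by ring

theorem stmt18 (Ω : Set (ℝ × ℝ)) (hΩo : IsOpen Ω)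
    (hΩb : Bornology.IsBounded Ω) (hΩ2 : C2Boundary Ω)
    (f : ℝ → ℝ) (hf : ContDiff ℝ 1 f) (hf0 : 0 < f 0)
    (C : ℝ) (hC : 0 < C)
    (u : ℝ → (ℝ × ℝ) → ℝ)
    (hcont : ∀ lam ∈ Set.Ioc (0:ℝ) 1, ContinuousOn (u lam) (closure Ω))
    (hreg : ∀ lam ∈ Set.Ioc (0:ℝ) 1, ContDiffOn ℝ 2 (u lam) Ω)
    (hpos : ∀ lam ∈ Set.Ioc (0:ℝ) 1, ∀ p ∈ Ω, 0 < u lam p)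
    (hbd : ∀ lam ∈ Set.Ioc (0:ℝ) 1, ∀ p ∈ frontier Ω, u lam p = 0)
    (hpde : ∀ lam ∈ Set.Ioc (0:ℝ) 1, ∀ p ∈ Ω, lapl (u lam) p = -(lam * f (u lam p)))
    (hub : ∀ lam ∈ Set.Ioc (0:ℝ) 1, ∀ p ∈ Ω, u lam p ≤ C) :
    ∃ C' > (0:ℝ), ∀ lam ∈ Set.Ioc (0:ℝ) 1, ∀ p ∈ Ω,
      0 < u lam p ∧ u lam p ≤ C' * lam :=
  stmt18_general Ω hΩo hΩb f hf C u hcont hreg hpos hbd hpde hub
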